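/- For 0 < a and 0 < b with a + b < 2, define h = √(1 − (a/2)²) − √(1 − ((a+b)/2)²), α = 2·arcsin((a+b)/2), β = arccos(1 − ((b/2)² + h²)/2), γ = 2·arcsin(a/2), S₁ = (b·h)/2 + (β − sin β) + (γ − sin γ)/2, and S₂ = (1/2 − ab/(a+b)²)·(α − sin α). Then for a = b (with 0 < a < 1), S₂ > S₁. -/

import Mathlib

open Real

noncomputable def curveH (a b : ℝ) : ℝ :=
  Real.sqrt (1 - (a / 2) ^ 2) - Real.sqrt (1 - ((a + b) / 2) ^ 2)

noncomputable def curveS₁ (a b : ℝ) : ℝ :=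
  b * curveH a b / 2
    + (Real.arccos (1 - ((b / 2) ^ 2 + (curveH a b) ^ 2) / 2)
        - Real.sin (Real.arccos (1 - ((b / 2) ^ 2 + (curveH a b) ^ 2) / 2)))
    + (2 * Real.arcsin (a / 2) - Real.sin (2 * Real.arcsin (a / 2))) / 2

noncomputable def curveS₂ (a b : ℝ) : ℝ :=
  (1 / 2 - a * b / (a + b) ^ 2)
    * (2 * Real.arcsin ((a + b) / 2) - Real.sin (2 * Real.arcsin ((a + b) / 2)))

/-!
For `a = b` write `θ = arcsin (a/2)` and `φ = arcsin a`. Then `h = cos θ - cos φ`, the chord of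
length `√((a/2)² + h²)` subtends the angle `β = φ - θ`, and all sines and cosines become
algebraic in `a`, `√(1 - (a/2)²)` and `√(1 - a²)`. The difference `2 (S₂ - S₁)` collapses to
`curveGap a`, which vanishes at `0` and has derivative
`(2 - x² - 2 √(1 - (x/2)²) √(1 - x²)) / √(1 - (x/2)²)`, positive on `(0, 1)` by AM-GM.
-/

noncomputable def curveGap (x : ℝ) : ℝ :=
  x * (2 * √(1 - (x / 2) ^ 2) - √(1 - x ^ 2)) - arcsin x

lemma hasDerivAt_curveGap {x : ℝ} (hx₀ : -1 < x) (hx₁ : x < 1) :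
    HasDerivAt curveGap
      ((2 - x ^ 2 - 2 * (√(1 - (x / 2) ^ 2) * √(1 - x ^ 2))) / √(1 - (x / 2) ^ 2)) x := by
  have hq₀ : 0 < 1 - x ^ 2 := by nlinarith
  have hp₀ : 0 < 1 - (x / 2) ^ 2 := by nlinarith
  have hp : 0 < √(1 - (x / 2) ^ 2) := sqrt_pos.mpr hp₀
  have hq : 0 < √(1 - x ^ 2) := sqrt_pos.mpr hq₀
  have dp : HasDerivAt (fun y : ℝ => √(1 - (y / 2) ^ 2)) (-(x / 2) / (2 * √(1 - (x / 2) ^ 2))) x :=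
    ((((hasDerivAt_id x).div_const 2).pow 2).const_sub 1).sqrt hp₀.ne' |>.congr_deriv (by simp; ring)
  have dq : HasDerivAt (fun y : ℝ => √(1 - y ^ 2)) (-(2 * x) / (2 * √(1 - x ^ 2))) x :=
    (((hasDerivAt_id x).pow 2).const_sub 1).sqrt hq₀.ne' |>.congr_deriv (by simp)
  have dF : HasDerivAt curveGap (1 * (2 * √(1 - (x / 2) ^ 2) - √(1 - x ^ 2))
      + x * (2 * (-(x / 2) / (2 * √(1 - (x / 2) ^ 2))) - -(2 * x) / (2 * √(1 - x ^ 2)))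
      - 1 / √(1 - x ^ 2)) x :=
    ((hasDerivAt_id x).mul ((dp.const_mul 2).sub dq)).sub (hasDerivAt_arcsin hx₀.ne' hx₁.ne)
  refine dF.congr_deriv ?_
  have hp₂ := sq_sqrt hp₀.le
  have hq₂ := sq_sqrt hq₀.le
  generalize √(1 - (x / 2) ^ 2) = p at hp hp₂ ⊢
  generalize √(1 - x ^ 2) = q at hq hq₂ ⊢
  field_simp
  linear_combination 4 * q * hp₂ + 2 * p * hq₂

lemma two_mul_sqrt_mul_sqrt_lt {x : ℝ} (hx₀ : x ≠ 0) (hx₁ : x ^ 2 ≤ 1) :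
    2 * (√(1 - (x / 2) ^ 2) * √(1 - x ^ 2)) < 2 - x ^ 2 := by
  have hx₂ : 0 < x ^ 2 := by positivity
  calc 2 * (√(1 - (x / 2) ^ 2) * √(1 - x ^ 2))
      ≤ √(1 - (x / 2) ^ 2) ^ 2 + √(1 - x ^ 2) ^ 2 := by
        linarith [two_mul_le_add_sq (√(1 - (x / 2) ^ 2)) (√(1 - x ^ 2))]
    _ = 2 - 5 / 4 * x ^ 2 := by rw [sq_sqrt (by nlinarith), sq_sqrt (by linarith)]; ring
    _ < 2 - x ^ 2 := by linarith

lemma strictMonoOn_curveGap : StrictMonoOn curveGap (Set.Icc 0 1) := by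
  refine strictMonoOn_of_deriv_pos (convex_Icc 0 1) (by unfold curveGap; fun_prop) ?_
  rw [interior_Icc]
  rintro x ⟨hx₀, hx₁⟩
  rw [(hasDerivAt_curveGap (by linarith) hx₁).deriv]
  have hp : 0 < √(1 - (x / 2) ^ 2) := sqrt_pos.mpr (by nlinarith)
  exact div_pos (by linarith [two_mul_sqrt_mul_sqrt_lt hx₀.ne' (by nlinarith)]) hp

lemma curveGap_pos {x : ℝ} (hx₀ : 0 < x) (hx₁ : x ≤ 1) : 0 < curveGap x := by
  have h := strictMonoOn_curveGap (Set.left_mem_Icc.mpr zero_le_one) ⟨hx₀.le, hx₁⟩ hx₀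
  simpa [curveGap] using h

lemma sin_two_mul_arcsin {x : ℝ} (hx₀ : -1 ≤ x) (hx₁ : x ≤ 1) :
    sin (2 * arcsin x) = 2 * x * √(1 - x ^ 2) := by
  rw [sin_two_mul, sin_arcsin hx₀ hx₁, cos_arcsin]

lemma curveS₂_self {a : ℝ} (ha₀ : a ≠ 0) (ha : |a| ≤ 1) :
    curveS₂ a a = (arcsin a - a * √(1 - a ^ 2)) / 2 := by
  obtain ⟨hneg, ha₁⟩ := abs_le.mp ha
  have hweight : a * a / (a + a) ^ 2 = 1 / 4 := by field_simp; ring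
  rw [curveS₂, hweight, add_self_div_two, sin_two_mul_arcsin hneg ha₁]
  ring

lemma curveS₁_self {a : ℝ} (ha₀ : 0 ≤ a) (ha₁ : a ≤ 1) :
    curveS₁ a a = arcsin a - a * √(1 - (a / 2) ^ 2) := by
  set θ := arcsin (a / 2)
  set φ := arcsin a
  have hsinθ : sin θ = a / 2 := sin_arcsin (by linarith) (by linarith)
  have hsinφ : sin φ = a := sin_arcsin (by linarith) ha₁
  have hcosθ : cos θ = √(1 - (a / 2) ^ 2) := cos_arcsin _
  have hcosφ : cos φ = √(1 - a ^ 2) := cos_arcsin _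
  have hH : curveH a a = cos θ - cos φ := by rw [curveH, add_self_div_two, hcosθ, hcosφ]
  have hchord : 1 - ((a / 2) ^ 2 + curveH a a ^ 2) / 2 = cos (φ - θ) := by
    rw [hH, cos_sub]
    linear_combination (-1 / 2 : ℝ) * (sin_sq_add_cos_sq θ + sin_sq_add_cos_sq φ)
      + (sin φ - sin θ + a / 2) / 2 * (hsinφ - hsinθ)
  have hβ : arccos (1 - ((a / 2) ^ 2 + curveH a a ^ 2) / 2) = φ - θ := by
    have hθφ : θ ≤ φ := monotone_arcsin (by linarith)
    have hθ : 0 ≤ θ := arcsin_nonneg.mpr (by linarith)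
    rw [hchord, arccos_cos (by linarith) (by linarith [arcsin_le_pi_div_two a, pi_pos])]
  rw [curveS₁, hβ, sin_sub, hH, sin_two_mul, hsinθ, hsinφ, hcosθ, hcosφ]
  ring

theorem curving_equal_sides_radius_half_better (a : ℝ) (ha : 0 < a) (ha1 : a < 1) :
    curveS₂ a a > curveS₁ a a := by
  have hgap := curveGap_pos ha ha1.le
  rw [curveS₂_self ha.ne' (abs_le.mpr ⟨by linarith, ha1.le⟩), curveS₁_self ha.le ha1.le]
  unfold curveGap at hgap
  linarith
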